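/- arXiv:1205.3891 — 5 statements merged into one kernel-verified Lean document; each statement's English description precedes it below -/
import Mathlib

section
/- (Claim in the proof of Lemma 2.2, limit as a → +∞) Let α ∈ (0,2), p = 2⌊2/α⌋ + 1, R > 0, and let e, η ∈ ℝ^N be orthogonal unit vectors. For a > 0 define q_a(t) = R e cos^p(2πt) + a η sin^p(2πt), so that |q_a(t)|² = R² cos^{2p}(2πt) + a² sin^{2p}(2πt). Then ∫₀¹ |q_a(t)|^{-α} dt → 0 as a → +∞. -/
open scoped InnerProductSpace

open Filter MeasureTheory Real

/-!
For `a ≥ 1` the curve `q_a` stays at distance at least `min R 1 · 2^(-p/2)` from the origin,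
since one of `cos² (2πt)`, `sin² (2πt)` is at least `1/2`; so `‖q_a‖^(-α)` is uniformly bounded.
Off the countable set where `sin (2πt) = 0` we have `‖q_a(t)‖ ≥ a |sin (2πt)|^p → ∞`, so the
integrand tends to `0` almost everywhere and dominated convergence finishes the proof.
-/

theorem tendsto_integral_rpow_neg_of_tendsto_atTop {X ι : Type*} [MeasurableSpace X]
    {μ : Measure X} [IsFiniteMeasure μ] {l : Filter ι} [l.IsCountablyGenerated]
    {f : ι → X → ℝ} {α C : ℝ} (hα : 0 < α) (hC : 0 < C)
    (hmeas : ∀ᶠ i in l, AEMeasurable (f i) μ) (hlow : ∀ᶠ i in l, ∀ x, C ≤ f i x)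
    (hlim : ∀ᵐ x ∂μ, Tendsto (fun i => f i x) l atTop) :
    Tendsto (fun i => ∫ x, f i x ^ (-α) ∂μ) l (nhds 0) := by
  have hbound : ∀ᶠ i in l, ∀ᵐ x ∂μ, ‖f i x ^ (-α)‖ ≤ C ^ (-α) := by
    filter_upwards [hlow] with i hi
    refine ae_of_all _ fun x => ?_
    rw [norm_of_nonneg (rpow_nonneg (hC.le.trans (hi x)) _)]
    exact rpow_le_rpow_of_nonpos hC (hi x) (neg_nonpos.mpr hα.le)
  simpa using tendsto_integral_filter_of_dominated_convergence (fun _ => C ^ (-α))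
    (hmeas.mono fun i hi => (hi.pow_const _).aestronglyMeasurable) hbound
    (integrable_const _) (hlim.mono fun x hx => (tendsto_rpow_neg_atTop hα).comp hx)

theorem norm_smul_add_smul_of_orthonormal {E : Type*} [NormedAddCommGroup E]
    [InnerProductSpace ℝ E] {e η : E} (he : ‖e‖ = 1) (hη : ‖η‖ = 1) (heη : ⟪e, η⟫_ℝ = 0)
    (x y : ℝ) : ‖x • e + y • η‖ = √(x ^ 2 + y ^ 2) := by
  rw [eq_comm, sqrt_eq_iff_eq_sq (by positivity) (norm_nonneg _), norm_add_sq_real,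
    real_inner_smul_left, real_inner_smul_right, heη, norm_smul, norm_smul, he, hη]
  simp only [norm_eq_abs, mul_one, mul_zero, add_zero, sq_abs]

theorem half_pow_le_sq_pow_add_sq_pow {c s : ℝ} (h : c ^ 2 + s ^ 2 = 1) (p : ℕ) :
    (1 / 2 : ℝ) ^ p ≤ (c ^ p) ^ 2 + (s ^ p) ^ 2 := by
  rw [← pow_mul, ← pow_mul, mul_comm p 2, pow_mul, pow_mul]
  rcases le_total (1 / 2) (c ^ 2) with hc | hs
  · linarith [pow_le_pow_left₀ (by norm_num) hc p, pow_nonneg (sq_nonneg s) p]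
  · linarith [pow_le_pow_left₀ (by norm_num) (by linarith : 1 / 2 ≤ s ^ 2) p,
      pow_nonneg (sq_nonneg c) p]

theorem min_sq_one_mul_half_pow_le {c s : ℝ} (h : c ^ 2 + s ^ 2 = 1) (p : ℕ) (R : ℝ)
    {a : ℝ} (ha : 1 ≤ a) :
    min (R ^ 2) 1 * (1 / 2 : ℝ) ^ p ≤ (R * c ^ p) ^ 2 + (a * s ^ p) ^ 2 := by
  have hmin := half_pow_le_sq_pow_add_sq_pow h p
  have hR : min (R ^ 2) 1 ≤ R ^ 2 := min_le_left _ _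
  have h1 : min (R ^ 2) 1 ≤ a ^ 2 := (min_le_right _ _).trans (one_le_pow₀ ha)
  rw [mul_pow, mul_pow]
  nlinarith [sq_nonneg (c ^ p), sq_nonneg (s ^ p), le_min (sq_nonneg R) zero_le_one]

theorem ae_sin_two_pi_mul_ne_zero : ∀ᵐ t : ℝ, sin (2 * π * t) ≠ 0 := by
  have hzeros : {t : ℝ | sin (2 * π * t) = 0} ⊆ Set.range (fun n : ℤ => (n : ℝ) / 2) := by
    intro t ht
    obtain ⟨n, hn⟩ := sin_eq_zero_iff.mp ht
    refine ⟨n, ?_⟩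
    field_simp [pi_ne_zero]
    nlinarith [hn, pi_pos]
  simpa [ae_iff] using ((Set.countable_range _).mono hzeros).measure_zero volume

theorem tendsto_sqrt_add_sq_mul_atTop (u : ℝ) {s : ℝ} (hs : s ≠ 0) :
    Tendsto (fun a : ℝ => √(u + (a * s) ^ 2)) atTop atTop := by
  simp only [mul_pow]
  exact tendsto_sqrt_atTop.comp <| tendsto_atTop_add_const_left _ u <|
    (tendsto_pow_atTop two_ne_zero).atTop_mul_const (by positivity)

theorem stmt_5_general {N : ℕ} (α : ℝ) (hα : α ∈ Set.Ioo (0 : ℝ) 2)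
    (p : ℕ)
    (R : ℝ) (hR : 0 < R) (e η : EuclideanSpace ℝ (Fin N))
    (he : ‖e‖ = 1) (hη : ‖η‖ = 1) (heη : ⟪e, η⟫_ℝ = 0)
    (q : ℝ → ℝ → EuclideanSpace ℝ (Fin N))
    (hq : ∀ a t, q a t = (R * Real.cos (2 * Real.pi * t) ^ p) • e
        + (a * Real.sin (2 * Real.pi * t) ^ p) • η) :
    Filter.Tendsto (fun a : ℝ => ∫ t in (0:ℝ)..1, ‖q a t‖ ^ (-α))
      Filter.atTop (nhds 0) := by
  simp only [hq, norm_smul_add_smul_of_orthonormal he hη heη,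
    intervalIntegral.integral_of_le zero_le_one]
  have hC : 0 < √(min (R ^ 2) 1 * (1 / 2 : ℝ) ^ p) :=
    sqrt_pos.mpr (mul_pos (lt_min (by positivity) one_pos) (by positivity))
  refine tendsto_integral_rpow_neg_of_tendsto_atTop hα.1 hC
    (Eventually.of_forall fun a => by fun_prop) ?_ ?_
  · filter_upwards [eventually_ge_atTop 1] with a ha t
    exact sqrt_le_sqrt (min_sq_one_mul_half_pow_le (cos_sq_add_sin_sq _) p R ha)
  · filter_upwards [ae_restrict_of_ae ae_sin_two_pi_mul_ne_zero] with t ht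
    exact tendsto_sqrt_add_sq_mul_atTop _ (pow_ne_zero p ht)

/-- Claim in the proof of Lemma 2.2 (limit as `a → +∞`):
for `q_a(t) = R cos^p(2πt) e + a sin^p(2πt) η`, `∫₀¹ ‖q_a(t)‖^(-α) dt → 0`. -/
theorem stmt_5 {N : ℕ} (hN : 2 ≤ N) (α : ℝ) (hα : α ∈ Set.Ioo (0 : ℝ) 2)
    (p : ℕ) (hp : p = 2 * ⌊2 / α⌋₊ + 1)
    (R : ℝ) (hR : 0 < R) (e η : EuclideanSpace ℝ (Fin N))
    (he : ‖e‖ = 1) (hη : ‖η‖ = 1) (heη : ⟪e, η⟫_ℝ = 0)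
    (q : ℝ → ℝ → EuclideanSpace ℝ (Fin N))
    (hq : ∀ a t, q a t = (R * Real.cos (2 * Real.pi * t) ^ p) • e
        + (a * Real.sin (2 * Real.pi * t) ^ p) • η) :
    Filter.Tendsto (fun a : ℝ => ∫ t in (0:ℝ)..1, ‖q a t‖ ^ (-α))
      Filter.atTop (nhds 0) :=
  stmt_5_general α hα p R hR e η he hη heη q hq
end

section
/- (Lemma 5.1, uniform lower bound away from the singularity) Suppose V satisfies (V₁) and let H > 0. Set m := ((2-α) C₁ / (2H))^{1/α}. Let a < b and let u : [a,b] → ℝ^N \ {0} be continuous, twice continuously differentiable on (a,b), satisfying ü(t) + ∇V(u(t)) = 0 and ½|u̇(t)|² + V(u(t)) = H on (a,b). If |u(a)| ≥ m and |u(b)| ≥ m, then |u(t)| ≥ m for all t ∈ [a,b]. -/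
/-!
Along the orbit, `r = ‖u‖²` obeys the Lagrange–Jacobi identity `r'' = 4H - 2(2-α) V(u)`, by the
energy relation and Euler's identity `⟪x, ∇V x⟫ = -α V x`. Euler's identity also makes `V`
homogeneous of degree `-α`, so `‖x‖^α V x ≥ C₁`, and `m` is exactly the radius below which this
forces `r'' < 0`. A minimum of `r` below `m²` would then lie inside `(a, b)`, where `r` is strictly
concave nearby, which is absurd.
-/

open scoped InnerProductSpace

open Set Filter Topology

theorem iterate_deriv_two_eq_of_hasDerivAt {f f' f'' : ℝ → ℝ} {s : Set ℝ} (hs : IsOpen s)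
    (hf : ∀ t ∈ s, HasDerivAt f (f' t) t) (hf' : ∀ t ∈ s, HasDerivAt f' (f'' t) t)
    {t : ℝ} (ht : t ∈ s) : deriv^[2] f t = f'' t := by
  have hderiv : deriv f =ᶠ[𝓝 t] f' :=
    eventually_of_mem (hs.mem_nhds ht) fun x hx => (hf x hx).deriv
  exact ((hf' t ht).congr_of_eventuallyEq hderiv).deriv

theorem le_on_Icc_of_hasDerivAt2_neg_of_lt {f f' f'' : ℝ → ℝ} {a b k : ℝ}
    (hf : ContinuousOn f (Icc a b)) (hf' : ∀ t ∈ Ioo a b, HasDerivAt f (f' t) t)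
    (hf'' : ∀ t ∈ Ioo a b, HasDerivAt f' (f'' t) t)
    (hneg : ∀ t ∈ Ioo a b, f t < k → f'' t < 0) (ha : k ≤ f a) (hb : k ≤ f b) :
    ∀ t ∈ Icc a b, k ≤ f t := by
  by_contra! ⟨t₁, ht₁, hlt⟩
  obtain ⟨t₀, ht₀, hmin⟩ := isCompact_Icc.exists_isMinOn ⟨t₁, ht₁⟩ hf
  have hk : f t₀ < k := (hmin ht₁).trans_lt hlt
  have ht₀' : t₀ ∈ Ioo a b :=
    ⟨ht₀.1.lt_of_ne (by rintro rfl; linarith), ht₀.2.lt_of_ne (by rintro rfl; linarith)⟩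
  obtain ⟨δ, hδ, hball⟩ := Metric.eventually_nhds_iff_ball.1
    ((isOpen_Ioo.eventually_mem ht₀').and ((hf' t₀ ht₀').continuousAt.eventually_lt_const hk))
  set D := Icc (t₀ - δ / 2) (t₀ + δ / 2)
  have hD : ∀ t ∈ D, t ∈ Ioo a b ∧ f t < k := fun t ht =>
    hball t (by rw [Metric.mem_ball, Real.dist_eq, abs_lt]; constructor <;> linarith [ht.1, ht.2])
  have hconc : StrictConcaveOn ℝ D f := by
    refine strictConcaveOn_of_deriv2_neg' (convex_Icc _ _)
      (hf.mono fun t ht => Ioo_subset_Icc_self (hD t ht).1) fun t ht => ?_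
    rw [iterate_deriv_two_eq_of_hasDerivAt isOpen_Ioo hf' hf'' (hD t ht).1]
    exact hneg t (hD t ht).1 (hD t ht).2
  have hlo : t₀ - δ / 2 ∈ D := ⟨le_rfl, by linarith⟩
  have hhi : t₀ + δ / 2 ∈ D := ⟨by linarith, le_rfl⟩
  have hmid : (1 / 2 : ℝ) • f (t₀ - δ / 2) + (1 / 2 : ℝ) • f (t₀ + δ / 2)
      < f ((1 / 2 : ℝ) • (t₀ - δ / 2) + (1 / 2 : ℝ) • (t₀ + δ / 2)) :=
    hconc.2 hlo hhi (by linarith) (by norm_num) (by norm_num) (by norm_num)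
  have hl : f t₀ ≤ f (t₀ - δ / 2) := hmin (Ioo_subset_Icc_self (hD _ hlo).1)
  have hr : f t₀ ≤ f (t₀ + δ / 2) := hmin (Ioo_subset_Icc_self (hD _ hhi).1)
  simp only [smul_eq_mul, show 1 / 2 * (t₀ - δ / 2) + 1 / 2 * (t₀ + δ / 2) = t₀ by ring] at hmid
  linarith

section

variable {E : Type*} [NormedAddCommGroup E] [InnerProductSpace ℝ E] {V : E → ℝ}

theorem pos_sInf_image_sphere [FiniteDimensional ℝ E] [Nontrivial E] (hV : ContinuousOn V {0}ᶜ)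
    (hpos : ∀ x ≠ 0, 0 < V x) :
    0 < sInf (V '' Metric.sphere (0 : E) 1) ∧ BddBelow (V '' Metric.sphere (0 : E) 1) := by
  have hsub : Metric.sphere (0 : E) 1 ⊆ {0}ᶜ := fun x hx =>
    ne_zero_of_mem_sphere one_ne_zero ⟨x, hx⟩
  have hK : IsCompact (V '' Metric.sphere (0 : E) 1) :=
    (isCompact_sphere 0 1).image_of_continuousOn (hV.mono hsub)
  obtain ⟨x, hx, hxinf⟩ := hK.sInf_mem ((NormedSpace.sphere_nonempty.2 zero_le_one).image V)
  exact ⟨hxinf ▸ hpos x (hsub hx), hK.bddBelow⟩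

variable [CompleteSpace E] {α : ℝ}

theorem rpow_mul_apply_smul_of_inner_gradient (hV : DifferentiableOn ℝ V {0}ᶜ)
    (hEuler : ∀ x ≠ 0, ⟪x, gradient V x⟫_ℝ = -α * V x) {x : E} (hx : x ≠ 0) {s : ℝ}
    (hs : 0 < s) : s ^ α * V (s • x) = V x := by
  have hder : ∀ z ∈ Ioi (0 : ℝ), HasDerivAt (fun z : ℝ => z ^ α * V (z • x)) 0 z := by
    intro z (hz : 0 < z)
    have hzx : z • x ≠ 0 := smul_ne_zero hz.ne' hx
    have hray : HasDerivAt (fun z : ℝ => V (z • x)) ⟪gradient V (z • x), x⟫_ℝ z := by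
      have hgrad := (hV.differentiableAt (isOpen_compl_singleton.mem_nhds hzx)).hasGradientAt
      refine (hgrad.hasFDerivAt.comp_hasDerivAt z ((hasDerivAt_id z).smul_const x)).congr_deriv ?_
      simp
    have hEuler' : ⟪gradient V (z • x), x⟫_ℝ = -α * z⁻¹ * V (z • x) := by
      have := hEuler _ hzx
      rw [real_inner_smul_left, real_inner_comm] at this
      field_simp
      linarith
    refine ((Real.hasDerivAt_rpow_const (p := α) (Or.inl hz.ne')).mul hray).congr_deriv ?_
    rw [hEuler', Real.rpow_sub hz, Real.rpow_one]
    field_simp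
    ring
  have := isOpen_Ioi.is_const_of_deriv_eq_zero isPreconnected_Ioi
    (fun z hz => (hder z hz).differentiableAt.differentiableWithinAt)
    (fun z hz => (hder z hz).deriv) (mem_Ioi.2 hs) (mem_Ioi.2 zero_lt_one)
  simpa using this

theorem sInf_image_sphere_le_rpow_norm_mul (hV : DifferentiableOn ℝ V {0}ᶜ)
    (hEuler : ∀ x ≠ 0, ⟪x, gradient V x⟫_ℝ = -α * V x)
    (hbdd : BddBelow (V '' Metric.sphere 0 1)) {x : E} (hx : x ≠ 0) :
    sInf (V '' Metric.sphere 0 1) ≤ ‖x‖ ^ α * V x := by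
  have hnorm : ‖x‖ ≠ 0 := norm_ne_zero_iff.2 hx
  have hsphere : ‖x‖⁻¹ • x ∈ Metric.sphere (0 : E) 1 := by
    simp [norm_smul, hnorm]
  have hsc := rpow_mul_apply_smul_of_inner_gradient hV hEuler
    (ne_zero_of_mem_sphere one_ne_zero ⟨_, hsphere⟩) (norm_pos_iff.2 hx)
  rw [smul_inv_smul₀ hnorm] at hsc
  rw [hsc]
  exact csInf_le hbdd (mem_image_of_mem V hsphere)

theorem hasDerivAt_two_inner_of_energy {H t : ℝ} {u u' : ℝ → E} {u'' : E}
    (hu : HasDerivAt u (u' t) t) (hu' : HasDerivAt u' u'' t)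
    (hode : u'' + gradient V (u t) = 0) (henergy : 1 / 2 * ‖u' t‖ ^ 2 + V (u t) = H)
    (hEuler : ⟪u t, gradient V (u t)⟫_ℝ = -α * V (u t)) :
    HasDerivAt (fun s => 2 * ⟪u s, u' s⟫_ℝ) (4 * H - 2 * (2 - α) * V (u t)) t := by
  refine ((hu.inner ℝ hu').const_mul 2).congr_deriv ?_
  rw [eq_neg_of_add_eq_zero_left hode, inner_neg_right, hEuler, real_inner_self_eq_norm_sq]
  linarith

end

theorem two_mul_lt_mul_of_lt_rpow_inv {C H r v α : ℝ} (hα : 0 < α) (hα2 : α < 2) (hH : 0 < H)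
    (hC : 0 < C) (hv : 0 < v) (hr : 0 ≤ r) (hCr : C ≤ r ^ α * v)
    (hlt : r < ((2 - α) * C / (2 * H)) ^ α⁻¹) : 2 * H < (2 - α) * v := by
  rw [Real.lt_rpow_inv_iff_of_pos hr (by positivity) hα, lt_div_iff₀ (by positivity)] at hlt
  have : C * (2 * H) < C * ((2 - α) * v) := by nlinarith
  nlinarith

theorem stmt_10_general {N : ℕ} (hN : 2 ≤ N) (V : EuclideanSpace ℝ (Fin N) → ℝ)
    (hV : ContDiffOn ℝ 1 V {0}ᶜ) (α : ℝ) (hα : α ∈ Set.Ioo (0 : ℝ) 2)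
    (hV1 : ∀ x : EuclideanSpace ℝ (Fin N), x ≠ 0 →
      ⟪x, gradient V x⟫_ℝ = -α * V x ∧ -α * V x < 0)
    (H : ℝ) (hH : 0 < H)
    (m : ℝ)
    (hm : m = ((2 - α) * sInf (V '' Metric.sphere (0 : EuclideanSpace ℝ (Fin N)) 1)
        / (2 * H)) ^ α⁻¹)
    (a b : ℝ) (u : ℝ → EuclideanSpace ℝ (Fin N))
    (hu : ContinuousOn u (Set.Icc a b))
    (hu0 : ∀ t ∈ Set.Icc a b, u t ≠ 0)
    (hu2 : ContDiffOn ℝ 2 u (Set.Ioo a b))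
    (hode : ∀ t ∈ Set.Ioo a b, deriv (deriv u) t + gradient V (u t) = 0)
    (henergy : ∀ t ∈ Set.Ioo a b, (1/2) * ‖deriv u t‖ ^ 2 + V (u t) = H)
    (ha : m ≤ ‖u a‖) (hb : m ≤ ‖u b‖) :
    ∀ t ∈ Set.Icc a b, m ≤ ‖u t‖ := by
  obtain ⟨hα0, hα2⟩ := hα
  have : Nonempty (Fin N) := ⟨⟨0, by omega⟩⟩
  have hVdiff : DifferentiableOn ℝ V {0}ᶜ := hV.differentiableOn one_ne_zero
  have hVpos : ∀ x ≠ 0, 0 < V x := fun x hx => pos_of_mul_neg_right (hV1 x hx).2 (by linarith)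
  obtain ⟨hC, hbdd⟩ := pos_sInf_image_sphere hVdiff.continuousOn hVpos
  have hm0 : 0 ≤ m := hm ▸ Real.rpow_nonneg (by positivity) _
  have hu' : ∀ t ∈ Ioo a b, HasDerivAt u (deriv u t) t := fun t ht =>
    ((hu2.differentiableOn two_ne_zero).differentiableAt (isOpen_Ioo.mem_nhds ht)).hasDerivAt
  have hu'' : ∀ t ∈ Ioo a b, HasDerivAt (deriv u) (deriv (deriv u) t) t := fun t ht =>
    (((hu2.deriv_of_isOpen isOpen_Ioo (by norm_num)).differentiableOn one_ne_zero).differentiableAt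
      (isOpen_Ioo.mem_nhds ht)).hasDerivAt
  have hconcave : ∀ t ∈ Ioo a b, ‖u t‖ ^ 2 < m ^ 2 → 4 * H - 2 * (2 - α) * V (u t) < 0 := by
    intro t ht hlt
    have hut := hu0 t (Ioo_subset_Icc_self ht)
    have := two_mul_lt_mul_of_lt_rpow_inv hα0 hα2 hH hC (hVpos _ hut) (norm_nonneg _)
      (sInf_image_sphere_le_rpow_norm_mul hVdiff (fun x hx => (hV1 x hx).1) hbdd hut)
      (hm ▸ lt_of_pow_lt_pow_left₀ 2 hm0 hlt)
    linarith
  have hsq := le_on_Icc_of_hasDerivAt2_neg_of_lt (hu.norm.pow 2)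
    (fun t ht => (hu' t ht).norm_sq)
    (fun t ht => hasDerivAt_two_inner_of_energy (hu' t ht) (hu'' t ht) (hode t ht) (henergy t ht)
      (hV1 _ (hu0 t (Ioo_subset_Icc_self ht))).1)
    hconcave (pow_le_pow_left₀ hm0 ha 2) (pow_le_pow_left₀ hm0 hb 2)
  exact fun t ht => (pow_le_pow_iff_left₀ hm0 (norm_nonneg _) two_ne_zero).1 (hsq t ht)

/-- Lemma 5.1 (uniform lower bound away from the singularity): a solution of
`ü + ∇V(u) = 0` with energy `H` on `(a,b)` whose endpoint norms are at least
`m = ((2-α) C₁ / (2H))^(1/α)` satisfies `‖u t‖ ≥ m` on all of `[a,b]`. -/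
theorem stmt_10 {N : ℕ} (hN : 2 ≤ N) (V : EuclideanSpace ℝ (Fin N) → ℝ)
    (hV : ContDiffOn ℝ 1 V {0}ᶜ) (α : ℝ) (hα : α ∈ Set.Ioo (0 : ℝ) 2)
    (hV1 : ∀ x : EuclideanSpace ℝ (Fin N), x ≠ 0 →
      ⟪x, gradient V x⟫_ℝ = -α * V x ∧ -α * V x < 0)
    (H : ℝ) (hH : 0 < H)
    (m : ℝ)
    (hm : m = ((2 - α) * sInf (V '' Metric.sphere (0 : EuclideanSpace ℝ (Fin N)) 1)
        / (2 * H)) ^ α⁻¹)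
    (a b : ℝ) (hab : a < b) (u : ℝ → EuclideanSpace ℝ (Fin N))
    (hu : ContinuousOn u (Set.Icc a b))
    (hu0 : ∀ t ∈ Set.Icc a b, u t ≠ 0)
    (hu2 : ContDiffOn ℝ 2 u (Set.Ioo a b))
    (hode : ∀ t ∈ Set.Ioo a b, deriv (deriv u) t + gradient V (u t) = 0)
    (henergy : ∀ t ∈ Set.Ioo a b, (1/2) * ‖deriv u t‖ ^ 2 + V (u t) = H)
    (ha : m ≤ ‖u a‖) (hb : m ≤ ‖u b‖) :
    ∀ t ∈ Set.Icc a b, m ≤ ‖u t‖ :=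
  stmt_10_general hN V hV α hα hV1 H hH m hm a b u hu hu0 hu2 hode henergy ha hb
end

section
/- (Lemma 5.2, quantitative escape-time estimate) Suppose V satisfies (V₁), let H > 0, set m := ((2-α) C₁ / (2H))^{1/α}, and let D be a constant with 0 < D < min{1, H m^α / C₂}. Let T > 0, R > L > 0, and let u : [-T/2, T/2] → ℝ^N \ {0} be continuous, twice continuously differentiable on (-T/2, T/2), satisfying ü + ∇V(u) = 0 and ½|u̇|² + V(u) = H on (-T/2, T/2), with |u(t)| ≥ m for all t, |u(-T/2)| = |u(T/2)| = R, and such that the set {t ∈ [-T/2, T/2] : |u(t)| ≤ L} is nonempty with supremum t₊. Then √(H - D C₂ / m^α) · (R - L) ≤ √2 · H · (T/2 - t₊). -/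
/-!
Since `V > 0` away from the origin, the energy relation bounds the speed by `√(2H)`, so `u` is
`√(2H)`-Lipschitz on `[-T/2, T/2]`. At `t₊` the orbit lies in the closed ball of radius `L`, at
`T/2` on the sphere of radius `R`, whence `R - L ≤ √(2H) (T/2 - t₊)`. Multiplying by
`√(H - D C₂ / m^α) ≤ √H` gives the claim, because `C₁, C₂ ≥ 0` make `D C₂ / m^α ≥ 0`.
-/

open Set
open scoped InnerProductSpace

theorem ContinuousOn.csSup_sep_le_mem {f : ℝ → ℝ} {a b c : ℝ} (hf : ContinuousOn f (Icc a b))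
    (hne : {t ∈ Icc a b | f t ≤ c}.Nonempty) :
    sSup {t ∈ Icc a b | f t ≤ c} ∈ {t ∈ Icc a b | f t ≤ c} :=
  (hf.preimage_isClosed_of_isClosed isClosed_Icc isClosed_Iic).csSup_mem hne
    (bddAbove_Icc.mono fun _ ht => ht.1)

theorem norm_image_sub_le_of_norm_deriv_le_Ioo {E : Type*} [NormedAddCommGroup E]
    [NormedSpace ℝ E] {f : ℝ → E} {a b C x y : ℝ} (hf : ContinuousOn f (Icc a b))
    (hd : DifferentiableOn ℝ f (Ioo a b)) (bound : ∀ t ∈ Ioo a b, ‖deriv f t‖ ≤ C)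
    (hx : x ∈ Icc a b) (hy : y ∈ Icc a b) : ‖f y - f x‖ ≤ C * ‖y - x‖ := by
  rcases eq_or_ne a b with rfl | hab
  · obtain rfl : x = a := by simpa using hx
    obtain rfl : y = x := by simpa using hy
    simp
  have hIoo : ∀ x ∈ Ioo a b, ∀ y ∈ Ioo a b, ‖f y - f x‖ ≤ C * ‖y - x‖ := fun x hx y hy =>
    (convex_Ioo a b).norm_image_sub_le_of_norm_deriv_le
      (fun t ht => hd.differentiableAt (isOpen_Ioo.mem_nhds ht)) bound hx hy
  rw [← closure_Ioo hab] at hf hx hy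
  refine le_on_closure (fun y' hy' => le_on_closure (fun x' hx' => hIoo x' hx' y' hy') ?_ ?_ hx)
    ?_ ?_ hy
  all_goals fun_prop

theorem norm_le_sqrt_of_kinetic_add_potential_eq {E : Type*} [NormedAddCommGroup E] {v : E}
    {P H : ℝ} (hP : 0 ≤ P) (h : (1 / 2) * ‖v‖ ^ 2 + P = H) : ‖v‖ ≤ Real.sqrt (2 * H) :=
  Real.le_sqrt_of_sq_le (by linarith)

theorem sqrt_mul_sqrt_two_mul_self {H : ℝ} (hH : 0 ≤ H) :
    Real.sqrt H * Real.sqrt (2 * H) = Real.sqrt 2 * H := by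
  rw [Real.sqrt_mul zero_le_two, mul_left_comm, Real.mul_self_sqrt hH]

theorem stmt_11_general {N : ℕ} (V : EuclideanSpace ℝ (Fin N) → ℝ)
    (α : ℝ) (hα : α ∈ Set.Ioo (0 : ℝ) 2)
    (hV1 : ∀ x : EuclideanSpace ℝ (Fin N), x ≠ 0 →
      ⟪x, gradient V x⟫_ℝ = -α * V x ∧ -α * V x < 0)
    (H : ℝ) (hH : 0 < H)
    (C₁ C₂ m : ℝ)
    (hC₁ : C₁ = sInf (V '' Metric.sphere (0 : EuclideanSpace ℝ (Fin N)) 1))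
    (hC₂ : C₂ = sSup (V '' Metric.sphere (0 : EuclideanSpace ℝ (Fin N)) 1))
    (hm : m = ((2 - α) * C₁ / (2 * H)) ^ α⁻¹)
    (D : ℝ) (hD0 : 0 < D)
    (T : ℝ) (R L : ℝ) (hLR : L < R)
    (u : ℝ → EuclideanSpace ℝ (Fin N))
    (hu : ContinuousOn u (Set.Icc (-(T/2)) (T/2)))
    (hu0 : ∀ t ∈ Set.Icc (-(T/2)) (T/2), u t ≠ 0)
    (hu2 : ContDiffOn ℝ 2 u (Set.Ioo (-(T/2)) (T/2)))
    (henergy : ∀ t ∈ Set.Ioo (-(T/2)) (T/2), (1/2) * ‖deriv u t‖ ^ 2 + V (u t) = H)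
    (hend₂ : ‖u (T/2)‖ = R)
    (hne : {t ∈ Set.Icc (-(T/2)) (T/2) | ‖u t‖ ≤ L}.Nonempty) :
    Real.sqrt (H - D * C₂ / m ^ α) * (R - L) ≤
      Real.sqrt 2 * H * (T/2 - sSup {t ∈ Set.Icc (-(T/2)) (T/2) | ‖u t‖ ≤ L}) := by
  obtain ⟨hα0, hα2⟩ := hα
  have hVpos : ∀ x, x ≠ 0 → 0 < V x := fun x hx =>
    pos_of_mul_pos_right (by linarith [(hV1 x hx).2]) hα0.le
  have hVsphere : ∀ y ∈ V '' Metric.sphere (0 : EuclideanSpace ℝ (Fin N)) 1, 0 ≤ y := by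
    rintro _ ⟨x, hx, rfl⟩
    exact (hVpos x (by rintro rfl; simp at hx)).le
  have hm0 : 0 ≤ m := hm ▸ Real.rpow_nonneg (by
    have := hC₁ ▸ Real.sInf_nonneg hVsphere
    have : 0 ≤ 2 - α := by linarith
    positivity) _
  have hsqrt : Real.sqrt (H - D * C₂ / m ^ α) ≤ Real.sqrt H := by
    have := hC₂ ▸ Real.sSup_nonneg hVsphere
    have : 0 ≤ D * C₂ / m ^ α := by positivity
    exact Real.sqrt_le_sqrt (by linarith)
  obtain ⟨⟨htp_lo, htp_hi⟩, htpL⟩ := hu.norm.csSup_sep_le_mem hne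
  set tp := sSup {t ∈ Icc (-(T/2)) (T/2) | ‖u t‖ ≤ L}
  have hspeed : ∀ t ∈ Ioo (-(T/2)) (T/2), ‖deriv u t‖ ≤ Real.sqrt (2 * H) := fun t ht =>
    norm_le_sqrt_of_kinetic_add_potential_eq (hVpos _ (hu0 t (Ioo_subset_Icc_self ht))).le
      (henergy t ht)
  have hRL : R - L ≤ Real.sqrt (2 * H) * (T/2 - tp) := by
    calc R - L ≤ ‖u (T/2)‖ - ‖u tp‖ := by linarith
      _ ≤ ‖u (T/2) - u tp‖ := norm_sub_norm_le _ _
      _ ≤ Real.sqrt (2 * H) * ‖T/2 - tp‖ :=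
        norm_image_sub_le_of_norm_deriv_le_Ioo hu (hu2.differentiableOn (by norm_num)) hspeed
          ⟨htp_lo, htp_hi⟩ ⟨htp_lo.trans htp_hi, le_rfl⟩
      _ = Real.sqrt (2 * H) * (T/2 - tp) := by rw [Real.norm_of_nonneg (by linarith)]
  calc Real.sqrt (H - D * C₂ / m ^ α) * (R - L) ≤ Real.sqrt H * (R - L) :=
        mul_le_mul_of_nonneg_right hsqrt (by linarith)
    _ ≤ Real.sqrt H * (Real.sqrt (2 * H) * (T/2 - tp)) :=
        mul_le_mul_of_nonneg_left hRL (Real.sqrt_nonneg _)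
    _ = Real.sqrt 2 * H * (T/2 - tp) := by rw [← mul_assoc, sqrt_mul_sqrt_two_mul_self hH.le]

/-- Lemma 5.2 (quantitative escape-time estimate): with
`m = ((2-α) C₁ / (2H))^(1/α)`, `0 < D < min 1 (H m^α / C₂)`, for a solution `u`
on `[-T/2, T/2]` with `‖u(±T/2)‖ = R`, `‖u‖ ≥ m`, and
`t₊ = sup {t : ‖u t‖ ≤ L}`, one has
`√(H - D C₂ / m^α) (R - L) ≤ √2 H (T/2 - t₊)`. -/
theorem stmt_11 {N : ℕ} (hN : 2 ≤ N) (V : EuclideanSpace ℝ (Fin N) → ℝ)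
    (hV : ContDiffOn ℝ 1 V {0}ᶜ) (α : ℝ) (hα : α ∈ Set.Ioo (0 : ℝ) 2)
    (hV1 : ∀ x : EuclideanSpace ℝ (Fin N), x ≠ 0 →
      ⟪x, gradient V x⟫_ℝ = -α * V x ∧ -α * V x < 0)
    (H : ℝ) (hH : 0 < H)
    (C₁ C₂ m : ℝ)
    (hC₁ : C₁ = sInf (V '' Metric.sphere (0 : EuclideanSpace ℝ (Fin N)) 1))
    (hC₂ : C₂ = sSup (V '' Metric.sphere (0 : EuclideanSpace ℝ (Fin N)) 1))
    (hm : m = ((2 - α) * C₁ / (2 * H)) ^ α⁻¹)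
    (D : ℝ) (hD0 : 0 < D) (hD1 : D < min 1 (H * m ^ α / C₂))
    (T : ℝ) (hT : 0 < T) (R L : ℝ) (hL : 0 < L) (hLR : L < R)
    (u : ℝ → EuclideanSpace ℝ (Fin N))
    (hu : ContinuousOn u (Set.Icc (-(T/2)) (T/2)))
    (hu0 : ∀ t ∈ Set.Icc (-(T/2)) (T/2), u t ≠ 0)
    (hu2 : ContDiffOn ℝ 2 u (Set.Ioo (-(T/2)) (T/2)))
    (hode : ∀ t ∈ Set.Ioo (-(T/2)) (T/2), deriv (deriv u) t + gradient V (u t) = 0)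
    (henergy : ∀ t ∈ Set.Ioo (-(T/2)) (T/2), (1/2) * ‖deriv u t‖ ^ 2 + V (u t) = H)
    (hlow : ∀ t ∈ Set.Icc (-(T/2)) (T/2), m ≤ ‖u t‖)
    (hend₁ : ‖u (-(T/2))‖ = R) (hend₂ : ‖u (T/2)‖ = R)
    (hne : {t ∈ Set.Icc (-(T/2)) (T/2) | ‖u t‖ ≤ L}.Nonempty) :
    Real.sqrt (H - D * C₂ / m ^ α) * (R - L) ≤
      Real.sqrt 2 * H * (T/2 - sSup {t ∈ Set.Icc (-(T/2)) (T/2) | ‖u t‖ ≤ L}) :=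
  stmt_11_general V α hα hV1 H hH C₁ C₂ m hC₁ hC₂ hm D hD0 T R L hLR u hu hu0 hu2 henergy hend₂ hne
end

section
/- (Angular-momentum-deficit derivative bound) Let V : ℝ^N \ {0} → ℝ be C¹, let I ⊆ ℝ be an open interval, and let u : I → ℝ^N \ {0} be twice continuously differentiable with ü(t) + ∇V(u(t)) = 0 on I. Define A(t) := √(|u(t)|² |u̇(t)|² - (u(t), u̇(t))²). Then the function t ↦ A(t)² is differentiable on I and |d/dt (A(t)²)| ≤ 2 A(t) |u(t)| |∇V(u(t))| for every t ∈ I. -/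
/-!
Write `v = u̇` and `G(x, y) = ‖x‖²‖y‖² - ⟪x, y⟫²`, so that `A² = G(u, v)`. Differentiating and
using `v̇ = -∇V(u)`, the terms `⟪u, v⟫‖v‖²` cancel and `d/dt A² = -2⟪‖u‖² v - ⟪u, v⟫ u, ∇V(u)⟫`.
The vector `‖u‖² v - ⟪u, v⟫ u` has squared norm `‖u‖² G(u, v)`, i.e. norm `‖u‖ A`, and
Cauchy–Schwarz gives the bound.
-/

open scoped InnerProductSpace

namespace InnerProductGeometry

variable {E : Type*} [NormedAddCommGroup E] [InnerProductSpace ℝ E]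

def gramDet (x y : E) : ℝ := ‖x‖ ^ 2 * ‖y‖ ^ 2 - ⟪x, y⟫_ℝ ^ 2

theorem gramDet_nonneg (x y : E) : 0 ≤ gramDet x y := by
  have h := abs_real_inner_le_norm x y
  rw [gramDet, ← mul_pow, sub_nonneg, ← sq_abs]
  exact pow_le_pow_left₀ (abs_nonneg _) h 2

theorem norm_sq_norm_sq_smul_sub_inner_smul (x y : E) :
    ‖‖x‖ ^ 2 • y - ⟪x, y⟫_ℝ • x‖ ^ 2 = ‖x‖ ^ 2 * gramDet x y := by
  simp only [norm_sub_sq_real, norm_smul, real_inner_smul_left, real_inner_smul_right,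
    Real.norm_eq_abs, mul_pow, sq_abs, real_inner_comm y x, gramDet]
  ring

theorem norm_norm_sq_smul_sub_inner_smul (x y : E) :
    ‖‖x‖ ^ 2 • y - ⟪x, y⟫_ℝ • x‖ = ‖x‖ * √(gramDet x y) := by
  rw [← Real.sqrt_sq (norm_nonneg _), norm_sq_norm_sq_smul_sub_inner_smul, Real.sqrt_mul',
    Real.sqrt_sq (norm_nonneg _)]
  exact gramDet_nonneg x y

theorem abs_inner_norm_sq_smul_sub_inner_smul_le (x y z : E) :
    |⟪‖x‖ ^ 2 • y - ⟪x, y⟫_ℝ • x, z⟫_ℝ| ≤ √(gramDet x y) * ‖x‖ * ‖z‖ := by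
  calc |⟪‖x‖ ^ 2 • y - ⟪x, y⟫_ℝ • x, z⟫_ℝ| ≤ ‖‖x‖ ^ 2 • y - ⟪x, y⟫_ℝ • x‖ * ‖z‖ :=
        abs_real_inner_le_norm _ _
    _ = √(gramDet x y) * ‖x‖ * ‖z‖ := by rw [norm_norm_sq_smul_sub_inner_smul]; ring

theorem hasDerivAt_gramDet {u v : ℝ → E} {a : E} {t : ℝ} (hu : HasDerivAt u (v t) t)
    (hv : HasDerivAt v a t) :
    HasDerivAt (fun s ↦ gramDet (u s) (v s))
      (2 * ⟪‖u t‖ ^ 2 • v t - ⟪u t, v t⟫_ℝ • u t, a⟫_ℝ) t := by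
  have h : HasDerivAt (fun s ↦ gramDet (u s) (v s)) _ t :=
    (hu.norm_sq.mul hv.norm_sq).sub ((hu.inner ℝ hv).fun_pow 2)
  refine h.congr_deriv ?_
  simp only [inner_sub_left, real_inner_smul_left, real_inner_self_eq_norm_sq]
  ring

end InnerProductGeometry

open InnerProductGeometry

theorem stmt_15_general {N : ℕ} (V : EuclideanSpace ℝ (Fin N) → ℝ)
    (I : Set ℝ) (hI : IsOpen I)
    (u : ℝ → EuclideanSpace ℝ (Fin N)) (hu : ContDiffOn ℝ 2 u I)
    (hode : ∀ t ∈ I, deriv (deriv u) t + gradient V (u t) = 0)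
    (A : ℝ → ℝ)
    (hA : ∀ t, A t =
      Real.sqrt (‖u t‖ ^ 2 * ‖deriv u t‖ ^ 2 - ⟪u t, deriv u t⟫_ℝ ^ 2)) :
    ∀ t ∈ I, DifferentiableAt ℝ (fun s => A s ^ 2) t ∧
      |deriv (fun s => A s ^ 2) t| ≤ 2 * A t * ‖u t‖ * ‖gradient V (u t)‖ := by
  intro t ht
  have hA_sq : (fun s ↦ A s ^ 2) = fun s ↦ gramDet (u s) (deriv u s) := by
    funext s
    rw [hA]
    exact Real.sq_sqrt (gramDet_nonneg _ _)
  have hI_nhds : I ∈ nhds t := hI.mem_nhds ht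
  have hu' : HasDerivAt u (deriv u t) t :=
    ((hu.contDiffAt hI_nhds).differentiableAt (by norm_num)).hasDerivAt
  have hv' : HasDerivAt (deriv u) (-gradient V (u t)) t := by
    rw [← eq_neg_of_add_eq_zero_left (hode t ht)]
    exact (((hu.deriv_of_isOpen (m := 1) hI (by norm_num)).contDiffAt hI_nhds).differentiableAt
      (by norm_num)).hasDerivAt
  have hderiv := hasDerivAt_gramDet hu' hv'
  rw [← hA_sq] at hderiv
  refine ⟨hderiv.differentiableAt, ?_⟩
  have hbound := abs_inner_norm_sq_smul_sub_inner_smul_le (u t) (deriv u t) (gradient V (u t))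
  rw [gramDet, ← hA] at hbound
  rw [hderiv.deriv, inner_neg_right, mul_neg, abs_neg, abs_mul, abs_two]
  linarith

/-- Angular-momentum-deficit derivative bound: for a `C²` solution of
`ü + ∇V(u) = 0` avoiding the origin on an open interval, `t ↦ A(t)²` is
differentiable and `|d/dt A(t)²| ≤ 2 A(t) ‖u t‖ ‖∇V (u t)‖`. -/
theorem stmt_15 {N : ℕ} (hN : 2 ≤ N) (V : EuclideanSpace ℝ (Fin N) → ℝ)
    (hV : ContDiffOn ℝ 1 V {0}ᶜ)
    (I : Set ℝ) (hI : IsOpen I) (hI' : I.OrdConnected)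
    (u : ℝ → EuclideanSpace ℝ (Fin N)) (hu : ContDiffOn ℝ 2 u I)
    (hu0 : ∀ t ∈ I, u t ≠ 0)
    (hode : ∀ t ∈ I, deriv (deriv u) t + gradient V (u t) = 0)
    (A : ℝ → ℝ)
    (hA : ∀ t, A t =
      Real.sqrt (‖u t‖ ^ 2 * ‖deriv u t‖ ^ 2 - ⟪u t, deriv u t⟫_ℝ ^ 2)) :
    ∀ t ∈ I, DifferentiableAt ℝ (fun s => A s ^ 2) t ∧
      |deriv (fun s => A s ^ 2) t| ≤ 2 * A t * ‖u t‖ * ‖gradient V (u t)‖ :=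
  stmt_15_general V I hI u hu hode A hA
end

section
/- (Estimate (29) in the proof of Lemma 6.3) Suppose V satisfies (V₂) with constants β > 1, M₀ > 0, r₀ ≥ 1, let H > 0 and η ∈ (0,1), and set c := √(2(1-η²)H). Let t₀ < t₁ and let u : [t₀,t₁] → ℝ^N \ {0} be twice continuously differentiable with ü(t) + ∇V(u(t)) = 0 on [t₀,t₁], such that |u(s)| ≥ r₀ and (d/ds)|u(s)| ≥ c for all s ∈ [t₀,t₁]. Define A(t) := √(|u(t)|² |u̇(t)|² - (u(t), u̇(t))²). Then for every t ∈ [t₀,t₁], A(t) ≤ A(t₀) + M₀ / ( c (β-1) |u(t₀)|^{β-1} ). -/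
/-!
`A² = ‖u‖²‖u̇‖² - ⟪u, u̇⟫²` has derivative `2⟪‖u‖² u̇ - ⟪u, u̇⟫ u, ü⟫`, and the vector
`‖u‖² u̇ - ⟪u, u̇⟫ u` has norm `‖u‖ A`; hence `Ȧ ≤ ‖u‖ ‖ü‖ = ‖u‖ ‖∇V(u)‖ ≤ M₀ ‖u‖^(-β)`.
Since `‖u‖` grows at rate at least `c`, `‖u(s)‖ ≥ ‖u(t₀)‖ + c (s - t₀)`, and integrating
`M₀ (‖u(t₀)‖ + c (s - t₀))^(-β)` from `t₀` gives at most `M₀ / (c (β-1) ‖u(t₀)‖^(β-1))`.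
-/

open scoped InnerProductSpace

open Set Filter Topology

theorem sqrt_le_sqrt_add_sub_of_hasDerivWithinAt_le {f f' g G : ℝ → ℝ} {a b : ℝ}
    (hf : ContinuousOn f (Icc a b)) (hf' : ∀ x ∈ Ico a b, HasDerivWithinAt f (f' x) (Ici x) x)
    (hG : ContinuousOn G (Icc a b)) (hG' : ∀ x ∈ Ico a b, HasDerivWithinAt G (g x) (Ici x) x)
    (hf₀ : ∀ x ∈ Icc a b, 0 ≤ f x) (hg₀ : ∀ x ∈ Ico a b, 0 ≤ g x)
    (hbound : ∀ x ∈ Ico a b, f' x ≤ 2 * √(f x) * g x) :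
    ∀ x ∈ Icc a b, √(f x) ≤ √(f a) + (G x - G a) := by
  intro x hx
  -- `√` is not differentiable at `0`, so run the comparison for `√(f + ε)` and let `ε → 0`.
  have hε : ∀ ε > 0, √(f x + ε) - √(f a + ε) ≤ G x - G a := by
    intro ε hε
    have hpos : ∀ y ∈ Icc a b, 0 < f y + ε := fun y hy ↦ by linarith [hf₀ y hy]
    have := image_le_of_deriv_right_le_deriv_boundary (f := fun y ↦ √(f y + ε))
      (B := fun y ↦ √(f a + ε) + (G y - G a)) (hf.add continuousOn_const).sqrt
      (fun y hy ↦ ((hf' y hy).add_const ε).sqrt (hpos y (Ico_subset_Icc_self hy)).ne')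
      (by simp) (continuousOn_const.add (hG.sub continuousOn_const))
      (fun y hy ↦ ((hG' y hy).sub_const (G a)).const_add _) ?_ hx
    · linarith
    intro y hy
    have hεy := hpos y (Ico_subset_Icc_self hy)
    rw [div_le_iff₀ (by positivity)]
    calc f' y ≤ 2 * √(f y) * g y := hbound y hy
      _ ≤ 2 * √(f y + ε) * g y := by gcongr; exacts [hg₀ y hy, by linarith]
      _ = g y * (2 * √(f y + ε)) := by ring
  have hlim : Tendsto (fun ε ↦ √(f x + ε) - √(f a + ε)) (𝓝[>] 0) (𝓝 (√(f x) - √(f a))) := by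
    have hcont : Continuous (fun ε ↦ √(f x + ε) - √(f a + ε)) := by fun_prop
    simpa using (hcont.tendsto 0).mono_left nhdsWithin_le_nhds
  linarith [le_of_tendsto hlim (eventually_nhdsWithin_of_forall hε)]

theorem mul_sub_le_image_sub_of_pos_le_derivWithin {f : ℝ → ℝ} {a b c : ℝ} (hc : 0 < c)
    (hf : ContinuousOn f (Icc a b)) (hf' : ∀ x ∈ Ioo a b, c ≤ derivWithin f (Icc a b) x) :
    ∀ x ∈ Icc a b, c * (x - a) ≤ f x - f a := by
  have hderiv : ∀ x ∈ Ioo a b, derivWithin f (Icc a b) x = deriv f x := fun x hx ↦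
    derivWithin_of_mem_nhds (Icc_mem_nhds hx.1 hx.2)
  intro x hx
  refine (convex_Icc a b).mul_sub_le_image_sub_of_le_deriv hf (fun y hy ↦ ?_) (fun y hy ↦ ?_)
    a (left_mem_Icc.2 (hx.1.trans hx.2)) x hx hx.1
  all_goals rw [interior_Icc] at hy
  -- `derivWithin` is `0` where `f` is not differentiable, so `0 < c ≤ derivWithin f` forces it.
  · have := differentiableWithinAt_of_derivWithin_ne_zero (hc.trans_le (hf' y hy)).ne'
    exact (this.differentiableAt (Icc_mem_nhds hy.1 hy.2)).differentiableWithinAt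
  · exact hderiv y hy ▸ hf' y hy

theorem mul_le_mul_rpow_neg_of_rpow_add_one_mul_le {ρ X y M β : ℝ} (hX : 0 < X) (hXρ : X ≤ ρ)
    (hβ : 0 ≤ β) (hM : 0 ≤ M) (h : ρ ^ (β + 1) * y ≤ M) : ρ * y ≤ M * X ^ (-β) := by
  have hρ : 0 < ρ := hX.trans_le hXρ
  calc ρ * y = ρ ^ (β + 1) * y * ρ ^ (-β) := by
        rw [Real.rpow_add hρ, Real.rpow_one, Real.rpow_neg hρ.le]
        field_simp
    _ ≤ M * ρ ^ (-β) := mul_le_mul_of_nonneg_right h (by positivity)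
    _ ≤ M * X ^ (-β) :=
      mul_le_mul_of_nonneg_left (Real.rpow_le_rpow_of_nonpos hX hXρ (by linarith)) hM

noncomputable def affineRpowPrimitive (r c β t₀ s : ℝ) : ℝ :=
  -((r + c * (s - t₀)) ^ (1 - β) / (c * (β - 1)))

theorem hasDerivAt_affineRpowPrimitive {r c β t₀ s : ℝ} (hc : c ≠ 0) (hβ : β ≠ 1)
    (hX : 0 < r + c * (s - t₀)) :
    HasDerivAt (affineRpowPrimitive r c β t₀) ((r + c * (s - t₀)) ^ (-β)) s := by
  have hlin : HasDerivAt (fun s ↦ r + c * (s - t₀)) c s := by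
    simpa using (((hasDerivAt_id s).sub_const t₀).const_mul c).const_add r
  refine ((hlin.rpow_const (Or.inl hX.ne')).div_const (c * (β - 1))).neg.congr_deriv ?_
  rw [show 1 - β - 1 = -β by ring]
  field_simp [sub_ne_zero.2 hβ]
  ring

theorem affineRpowPrimitive_sub_le {r c β t₀ t : ℝ} (hr : 0 < r) (hc : 0 < c) (hβ : 1 < β)
    (ht : t₀ ≤ t) :
    affineRpowPrimitive r c β t₀ t - affineRpowPrimitive r c β t₀ t₀
      ≤ 1 / (c * (β - 1) * r ^ (β - 1)) := by
  have hXt : 0 ≤ (r + c * (t - t₀)) ^ (1 - β) :=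
    Real.rpow_nonneg (by nlinarith [mul_nonneg hc.le (sub_nonneg.2 ht)]) _
  have hr' : r ^ (1 - β) = (r ^ (β - 1))⁻¹ := by
    rw [show 1 - β = -(β - 1) by ring, Real.rpow_neg hr.le]
  calc affineRpowPrimitive r c β t₀ t - affineRpowPrimitive r c β t₀ t₀
        = ((r ^ (β - 1))⁻¹ - (r + c * (t - t₀)) ^ (1 - β)) / (c * (β - 1)) := by
          simp only [affineRpowPrimitive, sub_self, mul_zero, add_zero, hr']
          ring
    _ ≤ (r ^ (β - 1))⁻¹ / (c * (β - 1)) := by gcongr; linarith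
    _ = 1 / (c * (β - 1) * r ^ (β - 1)) := by field_simp

section AngularMomentum

variable {E : Type*} [NormedAddCommGroup E] [InnerProductSpace ℝ E]

def angularMomentumSq (x v : E) : ℝ := ‖x‖ ^ 2 * ‖v‖ ^ 2 - ⟪x, v⟫_ℝ ^ 2

lemma angularMomentumSq_nonneg (x v : E) : 0 ≤ angularMomentumSq x v := by
  rw [angularMomentumSq, sub_nonneg, ← mul_pow, ← sq_abs]
  exact pow_le_pow_left₀ (abs_nonneg _) (abs_real_inner_le_norm x v) 2

lemma norm_norm_sq_smul_sub_inner_smul (x v : E) :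
    ‖‖x‖ ^ 2 • v - ⟪x, v⟫_ℝ • x‖ = ‖x‖ * √(angularMomentumSq x v) := by
  have hsq : ‖‖x‖ ^ 2 • v - ⟪x, v⟫_ℝ • x‖ ^ 2 = ‖x‖ ^ 2 * angularMomentumSq x v := by
    rw [← real_inner_self_eq_norm_sq]
    simp only [inner_sub_left, inner_sub_right, real_inner_smul_left, real_inner_smul_right]
    simp only [real_inner_self_eq_norm_sq, real_inner_comm v x, angularMomentumSq]
    ring
  rw [← Real.sqrt_sq (norm_nonneg _), hsq, Real.sqrt_mul (by positivity),
    Real.sqrt_sq (norm_nonneg _)]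

lemma norm_sq_mul_inner_sub_inner_mul_inner_le (x v w : E) :
    ‖x‖ ^ 2 * ⟪v, w⟫_ℝ - ⟪x, v⟫_ℝ * ⟪x, w⟫_ℝ ≤ ‖x‖ * √(angularMomentumSq x v) * ‖w‖ := by
  calc ‖x‖ ^ 2 * ⟪v, w⟫_ℝ - ⟪x, v⟫_ℝ * ⟪x, w⟫_ℝ = ⟪‖x‖ ^ 2 • v - ⟪x, v⟫_ℝ • x, w⟫_ℝ := by
        rw [inner_sub_left, real_inner_smul_left, real_inner_smul_left]
    _ ≤ ‖‖x‖ ^ 2 • v - ⟪x, v⟫_ℝ • x‖ * ‖w‖ := real_inner_le_norm _ _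
    _ = ‖x‖ * √(angularMomentumSq x v) * ‖w‖ := by rw [norm_norm_sq_smul_sub_inner_smul]

theorem HasDerivWithinAt.angularMomentumSq {u v : ℝ → E} {a : E} {s : Set ℝ} {x : ℝ}
    (hu : HasDerivWithinAt u (v x) s x) (hv : HasDerivWithinAt v a s x) :
    HasDerivWithinAt (fun t ↦ _root_.angularMomentumSq (u t) (v t))
      (2 * (‖u x‖ ^ 2 * ⟪v x, a⟫_ℝ - ⟪u x, v x⟫_ℝ * ⟪u x, a⟫_ℝ)) s x := by
  refine ((hu.norm_sq.mul hv.norm_sq).sub ((hu.inner ℝ hv).pow 2)).congr_deriv ?_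
  simp only [real_inner_self_eq_norm_sq, real_inner_comm (v x) (u x)]
  ring

theorem sqrt_angularMomentumSq_le_add_sub {u : ℝ → E} {g G : ℝ → ℝ} {a b : ℝ} (hab : a < b)
    (hu : ContDiffOn ℝ 2 u (Icc a b)) (hG : ContinuousOn G (Icc a b))
    (hG' : ∀ x ∈ Ico a b, HasDerivWithinAt G (g x) (Ici x) x)
    (hg : ∀ x ∈ Ico a b, ‖u x‖ * ‖derivWithin (derivWithin u (Icc a b)) (Icc a b) x‖ ≤ g x) :
    ∀ t ∈ Icc a b, √(angularMomentumSq (u t) (derivWithin u (Icc a b) t))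
      ≤ √(angularMomentumSq (u a) (derivWithin u (Icc a b) a)) + (G t - G a) := by
  set u' := derivWithin u (Icc a b)
  set u'' := derivWithin u' (Icc a b)
  have hu' : ContDiffOn ℝ 1 u' (Icc a b) := hu.derivWithin (uniqueDiffOn_Icc hab) (by norm_num)
  have hdu : ∀ x ∈ Ico a b, HasDerivWithinAt u (u' x) (Ici x) x := fun x hx ↦
    (hu.differentiableOn two_ne_zero x (Ico_subset_Icc_self hx)).hasDerivWithinAt
      |>.mono_of_mem_nhdsWithin (Icc_mem_nhdsGE_of_mem hx)
  have hdu' : ∀ x ∈ Ico a b, HasDerivWithinAt u' (u'' x) (Ici x) x := fun x hx ↦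
    (hu'.differentiableOn one_ne_zero x (Ico_subset_Icc_self hx)).hasDerivWithinAt
      |>.mono_of_mem_nhdsWithin (Icc_mem_nhdsGE_of_mem hx)
  have hcont : ContinuousOn (fun s ↦ angularMomentumSq (u s) (u' s)) (Icc a b) := by
    have := hu.continuousOn
    have := hu'.continuousOn
    unfold angularMomentumSq
    fun_prop
  refine sqrt_le_sqrt_add_sub_of_hasDerivWithinAt_le hcont
    (fun x hx ↦ (hdu x hx).angularMomentumSq (hdu' x hx)) hG hG'
    (fun x _ ↦ angularMomentumSq_nonneg _ _)
    (fun x hx ↦ (by positivity : (0 : ℝ) ≤ _).trans (hg x hx))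
    fun x hx ↦ ?_
  have := norm_sq_mul_inner_sub_inner_mul_inner_le (u x) (u' x) (u'' x)
  nlinarith [hg x hx, Real.sqrt_nonneg (angularMomentumSq (u x) (u' x))]

theorem sqrt_angularMomentumSq_le_of_radial_escape {u : ℝ → E} {a b c β M : ℝ} (hab : a < b)
    (hu : ContDiffOn ℝ 2 u (Icc a b)) (hc : 0 < c) (hβ : 1 < β) (hM : 0 ≤ M) (ha : u a ≠ 0)
    (hescape : ∀ x ∈ Ioo a b, c ≤ derivWithin (fun s ↦ ‖u s‖) (Icc a b) x)
    (hforce : ∀ x ∈ Ico a b,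
      ‖u x‖ ^ (β + 1) * ‖derivWithin (derivWithin u (Icc a b)) (Icc a b) x‖ ≤ M) :
    ∀ t ∈ Icc a b, √(angularMomentumSq (u t) (derivWithin u (Icc a b) t))
      ≤ √(angularMomentumSq (u a) (derivWithin u (Icc a b) a))
        + M / (c * (β - 1) * ‖u a‖ ^ (β - 1)) := by
  have hua : 0 < ‖u a‖ := norm_pos_iff.2 ha
  set X : ℝ → ℝ := fun s ↦ ‖u a‖ + c * (s - a)
  have hgrowth := mul_sub_le_image_sub_of_pos_le_derivWithin hc hu.continuousOn.norm hescape
  have hX : ∀ s ∈ Icc a b, 0 < X s ∧ X s ≤ ‖u s‖ := fun s hs ↦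
    ⟨add_pos_of_pos_of_nonneg hua (mul_nonneg hc.le (sub_nonneg.2 hs.1)),
      by linarith [hgrowth s hs]⟩
  have hG : ∀ s ∈ Icc a b, HasDerivAt (fun s ↦ M * affineRpowPrimitive ‖u a‖ c β a s)
      (M * X s ^ (-β)) s := fun s hs ↦
    (hasDerivAt_affineRpowPrimitive hc.ne' (by linarith) (hX s hs).1).const_mul M
  have key := sqrt_angularMomentumSq_le_add_sub hab hu
    (fun s hs ↦ (hG s hs).continuousAt.continuousWithinAt)
    (fun s hs ↦ (hG s (Ico_subset_Icc_self hs)).hasDerivWithinAt)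
    (fun s hs ↦ mul_le_mul_rpow_neg_of_rpow_add_one_mul_le (hX s (Ico_subset_Icc_self hs)).1
      (hX s (Ico_subset_Icc_self hs)).2 (by linarith) hM (hforce s hs))
  intro t ht
  calc _ ≤ _ := key t ht
    _ = √(angularMomentumSq (u a) (derivWithin u (Icc a b) a))
        + M * (affineRpowPrimitive ‖u a‖ c β a t - affineRpowPrimitive ‖u a‖ c β a a) := by ring
    _ ≤ _ := by
      rw [← mul_one_div]
      gcongr
      exact affineRpowPrimitive_sub_le hua hc hβ ht.1

end AngularMomentum

theorem stmt_16_general {N : ℕ} (V : EuclideanSpace ℝ (Fin N) → ℝ)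
    (β M₀ r₀ : ℝ) (hβ : 1 < β) (hM₀ : 0 < M₀)
    (hV2 : ∀ x : EuclideanSpace ℝ (Fin N), r₀ ≤ ‖x‖ →
      ‖x‖ ^ (β + 1) * ‖gradient V x‖ ≤ M₀)
    (H : ℝ) (hH : 0 < H) (η : ℝ) (hη : η ∈ Set.Ioo (0 : ℝ) 1)
    (c : ℝ) (hc : c = Real.sqrt (2 * (1 - η ^ 2) * H))
    (t₀ t₁ : ℝ) (ht : t₀ < t₁)
    (u : ℝ → EuclideanSpace ℝ (Fin N))
    (hu : ContDiffOn ℝ 2 u (Set.Icc t₀ t₁))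
    (hu0 : ∀ t ∈ Set.Icc t₀ t₁, u t ≠ 0)
    (hode : ∀ t ∈ Set.Icc t₀ t₁,
      derivWithin (derivWithin u (Set.Icc t₀ t₁)) (Set.Icc t₀ t₁) t
        + gradient V (u t) = 0)
    (hr : ∀ s ∈ Set.Icc t₀ t₁, r₀ ≤ ‖u s‖)
    (hd : ∀ s ∈ Set.Icc t₀ t₁,
      c ≤ derivWithin (fun τ => ‖u τ‖) (Set.Icc t₀ t₁) s)
    (A : ℝ → ℝ)
    (hA : ∀ t, A t = Real.sqrt
      (‖u t‖ ^ 2 * ‖derivWithin u (Set.Icc t₀ t₁) t‖ ^ 2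
        - ⟪u t, derivWithin u (Set.Icc t₀ t₁) t⟫_ℝ ^ 2)) :
    ∀ t ∈ Set.Icc t₀ t₁,
      A t ≤ A t₀ + M₀ / (c * (β - 1) * ‖u t₀‖ ^ (β - 1)) := by
  have hc0 : 0 < c := by
    have : η ^ 2 < 1 := by nlinarith [hη.1, hη.2]
    exact hc ▸ Real.sqrt_pos.2 (mul_pos (by linarith) hH)
  have hA' : ∀ s, A s = √(angularMomentumSq (u s) (derivWithin u (Icc t₀ t₁) s)) := hA
  intro t htI
  rw [hA', hA']
  refine sqrt_angularMomentumSq_le_of_radial_escape ht hu hc0 hβ hM₀.le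
    (hu0 t₀ (left_mem_Icc.2 ht.le)) (fun x hx ↦ hd x (Ioo_subset_Icc_self hx)) (fun x hx ↦ ?_) t htI
  have hxI := Ico_subset_Icc_self hx
  rw [eq_neg_of_add_eq_zero_left (hode x hxI), norm_neg]
  exact hV2 _ (hr x hxI)

/-- Estimate (29) in the proof of Lemma 6.3: under (V₂), for a solution of
`ü + ∇V(u) = 0` on `[t₀,t₁]` with `‖u‖ ≥ r₀` and `(d/ds)‖u s‖ ≥ c = √(2(1-η²)H)`,
one has `A t ≤ A t₀ + M₀ / (c (β-1) ‖u t₀‖^(β-1))`. -/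
theorem stmt_16 {N : ℕ} (hN : 2 ≤ N) (V : EuclideanSpace ℝ (Fin N) → ℝ)
    (hV : ContDiffOn ℝ 1 V {0}ᶜ)
    (β M₀ r₀ : ℝ) (hβ : 1 < β) (hM₀ : 0 < M₀) (hr₀ : 1 ≤ r₀)
    (hV2 : ∀ x : EuclideanSpace ℝ (Fin N), r₀ ≤ ‖x‖ →
      ‖x‖ ^ (β + 1) * ‖gradient V x‖ ≤ M₀)
    (H : ℝ) (hH : 0 < H) (η : ℝ) (hη : η ∈ Set.Ioo (0 : ℝ) 1)
    (c : ℝ) (hc : c = Real.sqrt (2 * (1 - η ^ 2) * H))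
    (t₀ t₁ : ℝ) (ht : t₀ < t₁)
    (u : ℝ → EuclideanSpace ℝ (Fin N))
    (hu : ContDiffOn ℝ 2 u (Set.Icc t₀ t₁))
    (hu0 : ∀ t ∈ Set.Icc t₀ t₁, u t ≠ 0)
    (hode : ∀ t ∈ Set.Icc t₀ t₁,
      derivWithin (derivWithin u (Set.Icc t₀ t₁)) (Set.Icc t₀ t₁) t
        + gradient V (u t) = 0)
    (hr : ∀ s ∈ Set.Icc t₀ t₁, r₀ ≤ ‖u s‖)
    (hd : ∀ s ∈ Set.Icc t₀ t₁,
      c ≤ derivWithin (fun τ => ‖u τ‖) (Set.Icc t₀ t₁) s)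
    (A : ℝ → ℝ)
    (hA : ∀ t, A t = Real.sqrt
      (‖u t‖ ^ 2 * ‖derivWithin u (Set.Icc t₀ t₁) t‖ ^ 2
        - ⟪u t, derivWithin u (Set.Icc t₀ t₁) t⟫_ℝ ^ 2)) :
    ∀ t ∈ Set.Icc t₀ t₁,
      A t ≤ A t₀ + M₀ / (c * (β - 1) * ‖u t₀‖ ^ (β - 1)) :=
  stmt_16_general V β M₀ r₀ hβ hM₀ hV2 H hH η hη c hc t₀ t₁ ht u hu hu0 hode hr hd A hA
end
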